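/- Let n be odd and let (W_{n+1}, σ) be the signed wheel C_n ∨ K₁ in which every rim edge (edge of C_n) is negative and every spoke (edge incident to the hub) is positive. Then the spectrum of D^±(W_{n+1}, σ) consists of the two simple eigenvalues n − 4 ± √(n² − 7n + 16) together with the eigenvalues −2 − 6cos(2jπ/n) for j = 1, 2, …, n − 1. -/

import Mathlib

open SimpleGraph

/-- The sign (product of edge signs) of a walk in a graph, computed along its darts. -/
def walkSign {V : Type*} {G : SimpleGraph V} (σ : V → V → ℤ) {u v : V} (p : G.Walk u v) : ℤ :=
  (p.darts.map fun d => σ d.toProd.1 d.toProd.2).prod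

/-- `σ` is a signature on `G`: a symmetric function that is `±1`-valued on edges. -/
def IsSignature {V : Type*} (G : SimpleGraph V) (σ : V → V → ℤ) : Prop :=
  (∀ u v, σ u v = σ v u) ∧ ∀ u v, G.Adj u v → σ u v = 1 ∨ σ u v = -1

/-- A signed graph is balanced when every cycle has sign `+1`. -/
def IsBalanced {V : Type*} (G : SimpleGraph V) (σ : V → V → ℤ) : Prop :=
  ∀ (u : V) (p : G.Walk u u), p.IsCycle → walkSign σ p = 1

/-- A walk is a shortest path when it is a path whose length is the graph distance
between its endpoints. -/
def IsShortestPath {V : Type*} {G : SimpleGraph V} {u v : V} (p : G.Walk u v) : Prop :=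
  p.IsPath ∧ p.length = G.dist u v

open scoped Classical in
/-- `σmax u v = +1` if some shortest `u v`-path is positive, `-1` otherwise. -/
noncomputable def sigmaMax {V : Type*} (G : SimpleGraph V) (σ : V → V → ℤ) (u v : V) : ℤ :=
  if ∃ p : G.Walk u v, IsShortestPath p ∧ walkSign σ p = 1 then 1 else -1

open scoped Classical in
/-- `σmin u v = +1` if all shortest `u v`-paths are positive, `-1` otherwise. -/
noncomputable def sigmaMin {V : Type*} (G : SimpleGraph V) (σ : V → V → ℤ) (u v : V) : ℤ :=
  if ∀ p : G.Walk u v, IsShortestPath p → walkSign σ p = 1 then 1 else -1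

/-- The signed distance matrix `D^max`, with `(u,v)` entry `σmax(u,v)·d(u,v)`. -/
noncomputable def Dmax {V : Type*} (G : SimpleGraph V) (σ : V → V → ℤ) : Matrix V V ℝ :=
  Matrix.of fun u v => (sigmaMax G σ u v : ℝ) * (G.dist u v : ℝ)

/-- The signed distance matrix `D^min`, with `(u,v)` entry `σmin(u,v)·d(u,v)`. -/
noncomputable def Dmin {V : Type*} (G : SimpleGraph V) (σ : V → V → ℤ) : Matrix V V ℝ :=
  Matrix.of fun u v => (sigmaMin G σ u v : ℝ) * (G.dist u v : ℝ)

/-- Two vertices are distance-compatible if all shortest paths between them have the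
same sign. -/
def Compatible {V : Type*} (G : SimpleGraph V) (σ : V → V → ℤ) (u v : V) : Prop :=
  ∀ p q : G.Walk u v, IsShortestPath p → IsShortestPath q → walkSign σ p = walkSign σ q

/-- A signed graph is distance-compatible if every pair of vertices is
distance-compatible. -/
def IsCompatibleGraph {V : Type*} (G : SimpleGraph V) (σ : V → V → ℤ) : Prop :=
  ∀ u v, Compatible G σ u v

/-- The largest eigenvalue of a (symmetric) real matrix: the supremum of the set of real
roots of its characteristic polynomial. -/
noncomputable def largestEigenvalue {n : Type*} [Fintype n] [DecidableEq n]
    (M : Matrix n n ℝ) : ℝ :=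
  sSup {x : ℝ | M.charpoly.IsRoot x}

/-- The wheel `W_{n+1} = C_n ∨ K₁`: the join of the cycle `C_n` with one hub vertex. -/
def wheelGraph (n : ℕ) : SimpleGraph (Fin n ⊕ Unit) where
  Adj u v :=
    match u, v with
    | Sum.inl i, Sum.inl j => (SimpleGraph.cycleGraph n).Adj i j
    | Sum.inl _, Sum.inr _ => True
    | Sum.inr _, Sum.inl _ => True
    | Sum.inr _, Sum.inr _ => False
  symm := by
    constructor
    rintro (i | i) (j | j) h <;> simp_all
    exact ((SimpleGraph.cycleGraph n).adj_symm h)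
  loopless := by
    constructor
    rintro (i | i) h
    · exact (SimpleGraph.cycleGraph n).irrefl h
    · exact h

/-- The signature of the signed wheel: rim edges (edges of `C_n`) are negative and
spokes (edges at the hub) are positive. -/
def wheelSign (n : ℕ) : (Fin n ⊕ Unit) → (Fin n ⊕ Unit) → ℤ
  | Sum.inl _, Sum.inl _ => -1
  | _, _ => 1

/-!
Every pair of vertices of the wheel is at distance at most 2. A single rim edge is negative, while
every path of length 2 between non-adjacent vertices uses two edges of the same sign and so is
positive. Hence `D^max = D^min = [[2A(C̄ₙ) − A(Cₙ), J], [Jᵀ, 0]]`, whose rim block is the circulant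
`2J − 2I − 3A(Cₙ)`.

The Fourier modes `χⱼ(k) = e^{2πijk/n}` diagonalise that block. For `j ≠ 0` the mode sums to zero,
so `(χⱼ, 0)` is an eigenvector of `D^±` with eigenvalue
`−2 − 3(χⱼ(1) + χⱼ(−1)) = −2 − 6cos(2πj/n)`.
On the span of `(1, 0)` and `(0, 1)`, `D^±` acts as `[[2n − 8, 1], [n, 0]]`, with eigenvalues
`n − 4 ± √(n² − 7n + 16)`. The `n + 1` eigenvectors are pairwise orthogonal, hence a basis, and
so the characteristic polynomial is the product of the `X − λ`.
-/

open Matrix Polynomial Real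

namespace Matrix

variable {ι 𝕜 : Type*} [Fintype ι] [DecidableEq ι] [Field 𝕜] [StarRing 𝕜]

lemma charpoly_eq_prod_of_orthogonal_eigenvectors (A : Matrix ι ι 𝕜) (v : ι → ι → 𝕜)
    (μ : ι → 𝕜) (hv : ∀ i, A *ᵥ v i = μ i • v i)
    (horth : ∀ i j, i ≠ j → star (v i) ⬝ᵥ v j = 0) (hne : ∀ i, star (v i) ⬝ᵥ v i ≠ 0) :
    A.charpoly = ∏ i, (X - C (μ i)) := by
  set P : Matrix ι ι 𝕜 := of fun k i => v i k
  have hAP : A * P = P * diagonal μ := by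
    ext k i
    rw [mul_diagonal]
    simpa [P, mul_apply, mulVec, dotProduct, mul_comm] using congrFun (hv i) k
  have hgram : Pᴴ * P = diagonal fun i => star (v i) ⬝ᵥ v i := by
    ext i j
    by_cases hij : i = j
    · simp [P, hij, mul_apply, dotProduct]
    · simp [P, hij, mul_apply, dotProduct, ← horth i j hij]
  have hP : IsUnit P.det := by
    have h := congrArg det hgram
    rw [det_mul, det_diagonal] at h
    refine isUnit_iff_ne_zero.mpr fun h0 => ?_
    rw [h0, mul_zero] at h
    exact Finset.prod_ne_zero_iff.mpr (fun i _ => hne i) h.symm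
  have hA : A = P * diagonal μ * P⁻¹ := by
    rw [← hAP, mul_nonsing_inv_cancel_right _ _ hP]
  rw [hA, ← charpoly_diagonal]
  simpa using charpoly_units_conj ((P.isUnit_iff_isUnit_det.mpr hP).unit) (diagonal μ)

end Matrix

lemma Polynomial.roots_fintype_prod_X_sub_C {ι R : Type*} [Fintype ι] [CommRing R] [IsDomain R]
    (μ : ι → R) : (∏ i, (X - C (μ i))).roots = Finset.univ.val.map μ := by
  rw [Finset.prod_eq_multiset_prod, ← roots_multiset_prod_X_sub_C (Finset.univ.val.map μ),
    Multiset.map_map]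
  rfl

section SignedDistance

variable {V : Type*} {G : SimpleGraph V} {σ : V → V → ℤ}

@[simp] lemma walkSign_nil (u : V) : walkSign σ (Walk.nil : G.Walk u u) = 1 := rfl

@[simp] lemma walkSign_cons {u v w : V} (h : G.Adj u v) (p : G.Walk v w) :
    walkSign σ (Walk.cons h p) = σ u v * walkSign σ p := by
  simp [walkSign]

lemma sigmaMax_eq_of_forall_isShortestPath {u v : V} {s : ℤ} (huv : G.Reachable u v)
    (hs : s = 1 ∨ s = -1) (h : ∀ p : G.Walk u v, IsShortestPath p → walkSign σ p = s) :
    sigmaMax G σ u v = s := by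
  obtain ⟨p, hp, hlen⟩ := huv.exists_path_of_dist
  rcases hs with rfl | rfl
  · exact if_pos ⟨p, ⟨hp, hlen⟩, h p ⟨hp, hlen⟩⟩
  · refine if_neg ?_
    rintro ⟨q, hq, hq_sign⟩
    have := h q hq
    omega

lemma sigmaMin_eq_of_forall_isShortestPath {u v : V} {s : ℤ} (huv : G.Reachable u v)
    (hs : s = 1 ∨ s = -1) (h : ∀ p : G.Walk u v, IsShortestPath p → walkSign σ p = s) :
    sigmaMin G σ u v = s := by
  obtain ⟨p, hp, hlen⟩ := huv.exists_path_of_dist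
  rcases hs with rfl | rfl
  · exact if_pos h
  · refine if_neg fun hall => ?_
    have := hall p ⟨hp, hlen⟩
    rw [h p ⟨hp, hlen⟩] at this
    omega

lemma Dmax_eq_of_forall_isShortestPath (hG : G.Connected) (τ : V → V → ℤ)
    (hτ : ∀ u v, τ u v = 1 ∨ τ u v = -1)
    (h : ∀ u v (p : G.Walk u v), IsShortestPath p → walkSign σ p = τ u v) :
    Dmax G σ = of fun u v => (τ u v : ℝ) * G.dist u v := by
  ext u v
  simp only [Dmax, of_apply, sigmaMax_eq_of_forall_isShortestPath (hG u v) (hτ u v) (h u v)]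

lemma Dmin_eq_of_forall_isShortestPath (hG : G.Connected) (τ : V → V → ℤ)
    (hτ : ∀ u v, τ u v = 1 ∨ τ u v = -1)
    (h : ∀ u v (p : G.Walk u v), IsShortestPath p → walkSign σ p = τ u v) :
    Dmin G σ = of fun u v => (τ u v : ℝ) * G.dist u v := by
  ext u v
  simp only [Dmin, of_apply, sigmaMin_eq_of_forall_isShortestPath (hG u v) (hτ u v) (h u v)]

end SignedDistance

lemma SimpleGraph.compl_adjMatrix_mulVec_apply {V α : Type*} [Fintype V] [DecidableEq V] [Ring α]
    (G : SimpleGraph V) [DecidableRel G.Adj] (v : V → α) (w : V) :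
    (Gᶜ.adjMatrix α *ᵥ v) w = ∑ u, v u - v w - (G.adjMatrix α *ᵥ v) w := by
  have hsplit : ∀ u, (if Gᶜ.Adj w u then v u else 0) =
      v u - (if w = u then v u else 0) - (if G.Adj w u then v u else 0) := by
    intro u
    by_cases h : w = u
    · simp [h]
    · by_cases ha : G.Adj w u <;> simp [h, ha]
  simp only [mulVec, dotProduct, adjMatrix_apply, ite_mul, one_mul, zero_mul]
  rw [Finset.sum_congr rfl fun u _ => hsplit u, Finset.sum_sub_distrib, Finset.sum_sub_distrib,
    Finset.sum_ite_eq, if_pos (Finset.mem_univ _)]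

lemma SimpleGraph.cycleGraph_adjMatrix_mulVec_apply {n : ℕ} {α : Type*} [NonAssocSemiring α]
    [NeZero n] (hn : 2 < n) (v : Fin n → α) (k : Fin n) :
    ((cycleGraph n).adjMatrix α *ᵥ v) k = v (k - 1) + v (k + 1) := by
  obtain ⟨m, rfl⟩ : ∃ m, n = m + 2 := ⟨n - 2, by omega⟩
  have hne : k - 1 ≠ k + 1 := by
    intro h
    rw [sub_eq_iff_eq_add, add_assoc, left_eq_add, Fin.ext_iff, Fin.val_add] at h
    simp [Nat.mod_eq_of_lt hn] at h
  rw [adjMatrix_mulVec_apply, cycleGraph_neighborFinset, Finset.sum_pair hne]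

section WheelDistance

variable {n : ℕ}

@[simp] lemma wheelGraph_adj_inl_inl {i j : Fin n} :
    (wheelGraph n).Adj (Sum.inl i) (Sum.inl j) ↔ (cycleGraph n).Adj i j := Iff.rfl

@[simp] lemma wheelGraph_adj_inl_inr (i : Fin n) (u : Unit) :
    (wheelGraph n).Adj (Sum.inl i) (Sum.inr u) := trivial

@[simp] lemma wheelGraph_adj_inr_inl (u : Unit) (i : Fin n) :
    (wheelGraph n).Adj (Sum.inr u) (Sum.inl i) := trivial

instance wheelGraph.decidableAdj (n : ℕ) : DecidableRel (wheelGraph n).Adj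
  | Sum.inl i, Sum.inl j => inferInstanceAs (Decidable ((cycleGraph n).Adj i j))
  | Sum.inl _, Sum.inr _ => isTrue trivial
  | Sum.inr _, Sum.inl _ => isTrue trivial
  | Sum.inr _, Sum.inr _ => isFalse id

lemma wheelGraph_connected : (wheelGraph n).Connected := by
  have hub : ∀ w, (wheelGraph n).Reachable w (Sum.inr ()) := by
    rintro (i | ⟨⟩)
    · exact (wheelGraph_adj_inl_inr i ()).reachable
    · rfl
  exact .mk fun u v => (hub u).trans (hub v).symm

lemma wheelGraph_dist_le_two (u v : Fin n ⊕ Unit) : (wheelGraph n).dist u v ≤ 2 := by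
  rcases u with i | ⟨⟩ <;> rcases v with j | ⟨⟩
  · exact dist_le (.cons (wheelGraph_adj_inl_inr i ()) (.cons (wheelGraph_adj_inr_inl () j) .nil))
  · exact (dist_eq_one_iff_adj.mpr (wheelGraph_adj_inl_inr i ())).trans_le one_le_two
  · exact (dist_eq_one_iff_adj.mpr (wheelGraph_adj_inr_inl () j)).trans_le one_le_two
  · simp

lemma wheelGraph_dist_inl_inl (i j : Fin n) :
    (wheelGraph n).dist (Sum.inl i) (Sum.inl j) =
      if i = j then 0 else if (cycleGraph n).Adj i j then 1 else 2 := by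
  split_ifs with hij hadj
  · simp [hij]
  · exact dist_eq_one_iff_adj.mpr hadj
  · have := wheelGraph_connected.one_lt_dist_of_ne_of_not_adj (Sum.inl_injective.ne hij) hadj
    have := wheelGraph_dist_le_two (Sum.inl i) (Sum.inl j)
    omega

lemma wheelSign_mul_wheelSign {u v : Fin n ⊕ Unit} (huv : ¬(wheelGraph n).Adj u v)
    (w : Fin n ⊕ Unit) : wheelSign n u w * wheelSign n w v = 1 := by
  rcases u with _ | _ <;> rcases v with _ | _ <;> rcases w with _ | _ <;>
    simp_all [wheelSign]

def wheelShortestSign (n : ℕ) (u v : Fin n ⊕ Unit) : ℤ :=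
  if (wheelGraph n).Adj u v then wheelSign n u v else 1

lemma wheelShortestSign_eq_one_or_neg_one (u v : Fin n ⊕ Unit) :
    wheelShortestSign n u v = 1 ∨ wheelShortestSign n u v = -1 := by
  unfold wheelShortestSign
  split_ifs
  · rcases u with _ | _ <;> rcases v with _ | _ <;> simp [wheelSign]
  · exact .inl rfl

lemma walkSign_eq_wheelShortestSign_of_isShortestPath {u v : Fin n ⊕ Unit}
    (p : (wheelGraph n).Walk u v) (hp : IsShortestPath p) :
    walkSign (wheelSign n) p = wheelShortestSign n u v := by
  obtain ⟨-, hlen⟩ := hp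
  have hle := wheelGraph_dist_le_two u v
  rcases p with _ | ⟨h₁, _ | ⟨h₂, _ | ⟨h₃, q⟩⟩⟩
  · simp [wheelShortestSign]
  · simp [wheelShortestSign, h₁]
  · have hnadj : ¬(wheelGraph n).Adj u v := by
      rw [← dist_eq_one_iff_adj, ← hlen]
      simp
    simpa [wheelShortestSign, hnadj] using wheelSign_mul_wheelSign hnadj _
  · simp only [Walk.length_cons] at hlen
    omega

end WheelDistance

section WheelMatrix

variable {n : ℕ}

def signedWheelDistMatrix (α : Type*) [Ring α] (n : ℕ) : Matrix (Fin n ⊕ Unit) (Fin n ⊕ Unit) α :=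
  fromBlocks ((2 : α) • (cycleGraph n)ᶜ.adjMatrix α - (cycleGraph n).adjMatrix α)
    (of fun _ _ => 1) (of fun _ _ => 1) 0

lemma of_wheelShortestSign_mul_dist :
    (of fun u v => (wheelShortestSign n u v : ℝ) * (wheelGraph n).dist u v) =
      signedWheelDistMatrix ℝ n := by
  ext (i | u) (j | v)
  · by_cases hij : i = j
    · simp [signedWheelDistMatrix, hij]
    · by_cases hadj : (cycleGraph n).Adj i j <;>
        simp [signedWheelDistMatrix, wheelShortestSign, wheelGraph_dist_inl_inl, adjMatrix_apply,
          wheelSign, hij, hadj]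
  all_goals simp [signedWheelDistMatrix, wheelShortestSign, wheelSign]

lemma Dmax_wheelGraph : Dmax (wheelGraph n) (wheelSign n) = signedWheelDistMatrix ℝ n := by
  rw [Dmax_eq_of_forall_isShortestPath wheelGraph_connected _ wheelShortestSign_eq_one_or_neg_one
    fun _ _ => walkSign_eq_wheelShortestSign_of_isShortestPath, of_wheelShortestSign_mul_dist]

lemma Dmin_wheelGraph : Dmin (wheelGraph n) (wheelSign n) = signedWheelDistMatrix ℝ n := by
  rw [Dmin_eq_of_forall_isShortestPath wheelGraph_connected _ wheelShortestSign_eq_one_or_neg_one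
    fun _ _ => walkSign_eq_wheelShortestSign_of_isShortestPath, of_wheelShortestSign_mul_dist]

lemma signedWheelDistMatrix_map {α β : Type*} [Ring α] [Ring β] (f : α →+* β) :
    (signedWheelDistMatrix α n).map f = signedWheelDistMatrix β n := by
  ext (i | u) (j | v) <;> simp [signedWheelDistMatrix, adjMatrix_apply, apply_ite f, map_ofNat]

end WheelMatrix

section RimModes

variable {n : ℕ} [NeZero n]

lemma ZMod.finEquiv_val (j : Fin n) : (ZMod.finEquiv n j).val = j.val := by
  obtain ⟨m, rfl⟩ : ∃ m, n = m + 1 := ⟨n - 1, (Nat.succ_pred_eq_of_pos (NeZero.pos n)).symm⟩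
  rfl

/-- The Fourier mode `k ↦ exp (2πi jk / n)` of frequency `j` on `Fin n`. -/
noncomputable def rimMode (j k : Fin n) : ℂ :=
  ZMod.stdAddChar (ZMod.finEquiv n j * ZMod.finEquiv n k)

@[simp] lemma rimMode_zero_left (k : Fin n) : rimMode 0 k = 1 := by
  simp [rimMode]

lemma rimMode_add_right (j k k' : Fin n) : rimMode j (k + k') = rimMode j k * rimMode j k' := by
  simp only [rimMode, map_add, mul_add, AddChar.map_add_eq_mul]

lemma star_rimMode_mul_rimMode (j j' k : Fin n) :
    star (rimMode j k) * rimMode j' k = rimMode (j' - j) k := by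
  rw [rimMode, rimMode, rimMode, map_sub, sub_mul, sub_eq_neg_add, AddChar.map_add_eq_mul,
    AddChar.map_neg_eq_conj, RCLike.star_def]

lemma sum_rimMode (j : Fin n) : ∑ k, rimMode j k = if j = 0 then (n : ℂ) else 0 := by
  calc ∑ k, rimMode j k = ∑ z, ZMod.stdAddChar (z * ZMod.finEquiv n j) := by
        rw [← (ZMod.finEquiv n).toEquiv.sum_comp]
        simp [rimMode, mul_comm]
    _ = if j = 0 then (n : ℂ) else 0 := by
        rw [AddChar.sum_mulShift _ (ZMod.isPrimitive_stdAddChar n)]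
        simp

lemma rimMode_one_add_rimMode_neg_one (j : Fin n) :
    rimMode j 1 + rimMode j (-1) = 2 * cos (2 * j * π / n) := by
  rw [rimMode, rimMode, map_neg, map_one, mul_one, mul_neg_one, AddChar.map_neg_eq_conj,
    Complex.add_conj, ZMod.stdAddChar_apply, ZMod.toCircle_apply, ZMod.finEquiv_val]
  have : 2 * π * Complex.I * (j.val : ℕ) / n = ((2 * j * π / n : ℝ) : ℂ) * Complex.I := by
    push_cast
    ring
  rw [this, Complex.exp_ofReal_mul_I_re]
  norm_cast

noncomputable def rimEigenvalue (j : Fin n) : ℝ :=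
  (if j = 0 then 2 * n else 0) - 2 - 6 * cos (2 * j * π / n)

lemma rimOperator_mulVec_rimMode (hn : 2 < n) (j : Fin n) :
    ((2 : ℂ) • (cycleGraph n)ᶜ.adjMatrix ℂ - (cycleGraph n).adjMatrix ℂ) *ᵥ rimMode j =
      (rimEigenvalue j : ℂ) • rimMode j := by
  ext k
  have hneighbours : ((cycleGraph n).adjMatrix ℂ *ᵥ rimMode j) k =
      rimMode j k * (2 * cos (2 * j * π / n)) := by
    rw [cycleGraph_adjMatrix_mulVec_apply hn, sub_eq_add_neg, rimMode_add_right,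
      rimMode_add_right, ← rimMode_one_add_rimMode_neg_one]
    ring
  have hsum : 2 * ∑ k', rimMode j k' = (if j = 0 then 2 * (n : ℂ) else 0) * rimMode j k := by
    rw [sum_rimMode]
    split_ifs with hj
    · simp [hj]
    · simp
  simp only [sub_mulVec, smul_mulVec, Pi.sub_apply, Pi.smul_apply, smul_eq_mul,
    compl_adjMatrix_mulVec_apply, hneighbours, rimEigenvalue]
  split_ifs at hsum ⊢ <;> push_cast <;> linear_combination hsum

end RimModes

section WheelEigenbasis

variable {n : ℕ} [NeZero n]

noncomputable def hubRadical (n : ℕ) : ℝ := √((n : ℝ) ^ 2 - 7 * n + 16)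

lemma hubRadical_sq (n : ℕ) : hubRadical n ^ 2 = ((n : ℝ) - 4) ^ 2 + n := by
  rw [hubRadical, Real.sq_sqrt (by nlinarith [sq_nonneg ((n : ℝ) - 7 / 2)])]
  ring

/- The eigenvector indexed by `inl j`, `j ≠ 0`, is `(χⱼ, 0)`. Those indexed by `inl 0` and `inr`
are `(1, t)` for the two roots `t` of `t² + (2n − 8)t = n`, which make `(1, t)` an eigenvector of
`[[2n − 8, 1], [n, 0]]` with eigenvalue `2n − 8 + t`. -/

def wheelFrequency : Fin n ⊕ Unit → Fin n := Sum.elim id 0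

noncomputable def wheelHubWeight : Fin n ⊕ Unit → ℝ
  | Sum.inl j => if j = 0 then hubRadical n - (n - 4) else 0
  | Sum.inr _ => -hubRadical n - (n - 4)

noncomputable def wheelEigenvalue : Fin n ⊕ Unit → ℝ
  | Sum.inl j => if j = 0 then n - 4 + hubRadical n else rimEigenvalue j
  | Sum.inr _ => n - 4 - hubRadical n

noncomputable def wheelEigenvector (x : Fin n ⊕ Unit) : Fin n ⊕ Unit → ℂ :=
  Sum.elim (rimMode (wheelFrequency x)) fun _ => (wheelHubWeight x : ℂ)

lemma wheelHubWeight_eq_zero {x : Fin n ⊕ Unit} (hx : wheelFrequency x ≠ 0) :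
    wheelHubWeight x = 0 := by
  rcases x with j | _
  · exact if_neg hx
  · exact absurd rfl hx

lemma wheelHubWeight_mul_rimMode (x : Fin n ⊕ Unit) (k : Fin n) :
    (wheelHubWeight x : ℂ) * rimMode (wheelFrequency x) k = wheelHubWeight x := by
  by_cases hx : wheelFrequency x = 0
  · simp [hx]
  · simp [wheelHubWeight_eq_zero hx]

lemma wheelEigenvalue_eq_rimEigenvalue_add (x : Fin n ⊕ Unit) :
    wheelEigenvalue x = rimEigenvalue (wheelFrequency x) + wheelHubWeight x := by
  rcases x with j | _
  · by_cases hj : j = 0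
    · simp [wheelEigenvalue, wheelHubWeight, rimEigenvalue, wheelFrequency, hj]
      ring
    · simp [wheelEigenvalue, wheelHubWeight, wheelFrequency, hj]
  · simp [wheelEigenvalue, wheelHubWeight, rimEigenvalue, wheelFrequency]
    ring

lemma wheelEigenvalue_mul_wheelHubWeight (x : Fin n ⊕ Unit) :
    wheelEigenvalue x * wheelHubWeight x = if wheelFrequency x = 0 then (n : ℝ) else 0 := by
  have hsq := hubRadical_sq n
  rcases x with j | _
  · by_cases hj : j = 0
    · simp [wheelEigenvalue, wheelHubWeight, wheelFrequency, hj]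
      linear_combination hsq
    · simp [wheelHubWeight, wheelFrequency, hj]
  · simp [wheelEigenvalue, wheelHubWeight, wheelFrequency]
    linear_combination hsq

lemma wheelHubWeight_mul_of_ne {x y : Fin n ⊕ Unit} (hxy : x ≠ y)
    (hf : wheelFrequency x = wheelFrequency y) : wheelHubWeight x * wheelHubWeight y = -n := by
  have hsq := hubRadical_sq n
  rcases x with j | _ <;> rcases y with j' | _
  · exact absurd (congrArg Sum.inl hf) hxy
  · simp only [wheelFrequency, Sum.elim_inl, Sum.elim_inr, id, Pi.zero_apply] at hf
    simp [wheelHubWeight, hf]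
    linear_combination -hsq
  · simp only [wheelFrequency, Sum.elim_inl, Sum.elim_inr, id, Pi.zero_apply] at hf
    simp [wheelHubWeight, ← hf]
    linear_combination -hsq
  · exact absurd rfl hxy

lemma signedWheelDistMatrix_mulVec_wheelEigenvector (hn : 2 < n) (x : Fin n ⊕ Unit) :
    signedWheelDistMatrix ℂ n *ᵥ wheelEigenvector x =
      (wheelEigenvalue x : ℂ) • wheelEigenvector x := by
  rw [signedWheelDistMatrix, fromBlocks_mulVec]
  ext (k | _)
  · simp only [wheelEigenvector, Sum.elim_comp_inl, Sum.elim_comp_inr, Sum.elim_inl,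
      rimOperator_mulVec_rimMode hn, Pi.add_apply, Pi.smul_apply, smul_eq_mul]
    simp only [mulVec, dotProduct, of_apply, one_mul, Finset.univ_unique, Finset.sum_singleton,
      wheelEigenvalue_eq_rimEigenvalue_add]
    push_cast
    linear_combination (wheelHubWeight_mul_rimMode x k).symm
  · simp only [wheelEigenvector, Sum.elim_comp_inl, Sum.elim_comp_inr, Sum.elim_inr,
      Pi.add_apply, Pi.smul_apply, smul_eq_mul, zero_mulVec]
    simp only [mulVec, dotProduct, of_apply, one_mul, sum_rimMode, Pi.zero_apply, add_zero]
    rw [← Complex.ofReal_mul, wheelEigenvalue_mul_wheelHubWeight]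
    split_ifs <;> simp

lemma star_wheelEigenvector_dotProduct (x y : Fin n ⊕ Unit) :
    star (wheelEigenvector x) ⬝ᵥ wheelEigenvector y =
      if x = y then (n : ℂ) + (wheelHubWeight x : ℂ) ^ 2 else 0 := by
  simp only [dotProduct, Fintype.sum_sum_type, wheelEigenvector, Pi.star_apply, Sum.elim_inl,
    Sum.elim_inr, star_rimMode_mul_rimMode, sum_rimMode, sub_eq_zero, Finset.univ_unique,
    Finset.sum_singleton]
  rw [Complex.star_def, Complex.conj_ofReal]
  by_cases hxy : x = y
  · simp [hxy, sq]
  by_cases hf : wheelFrequency y = wheelFrequency x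
  · rw [if_pos hf, if_neg hxy, ← Complex.ofReal_mul, wheelHubWeight_mul_of_ne hxy hf.symm]
    simp
  · have hzero : wheelHubWeight x = 0 ∨ wheelHubWeight y = 0 := by
      by_cases hx : wheelFrequency x = 0
      · exact .inr (wheelHubWeight_eq_zero (hx ▸ hf))
      · exact .inl (wheelHubWeight_eq_zero hx)
    rcases hzero with h | h <;> simp [hf, hxy, h]

lemma charpoly_signedWheelDistMatrix (hn : 2 < n) :
    (signedWheelDistMatrix ℝ n).charpoly = ∏ x : Fin n ⊕ Unit, (X - C (wheelEigenvalue x)) := by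
  apply map_injective (algebraMap ℝ ℂ) (algebraMap ℝ ℂ).injective
  have hgram := @star_wheelEigenvector_dotProduct n _
  rw [← charpoly_map, signedWheelDistMatrix_map, charpoly_eq_prod_of_orthogonal_eigenvectors _
    wheelEigenvector (fun x => (wheelEigenvalue x : ℂ))
    (signedWheelDistMatrix_mulVec_wheelEigenvector hn) (fun x y hxy => by rw [hgram, if_neg hxy])
    (fun x => by
      rw [hgram, if_pos rfl]
      exact_mod_cast (by positivity : (0 : ℝ) < n + wheelHubWeight x ^ 2).ne')]
  simp [Polynomial.map_prod]

lemma univ_val_map_wheelEigenvalue :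
    (Finset.univ : Finset (Fin n ⊕ Unit)).val.map wheelEigenvalue =
      ((n : ℝ) - 4 + hubRadical n) ::ₘ ((n : ℝ) - 4 - hubRadical n) ::ₘ
        (Finset.Icc 1 (n - 1)).val.map fun j : ℕ => -2 - 6 * cos (2 * j * π / n) := by
  have hIcc : Finset.Icc 1 (n - 1) = (Finset.Ioi (0 : Fin n)).map Fin.valEmbedding := by
    rw [Fin.map_valEmbedding_Ioi]
    ext
    simp
    omega
  have hrim : (Finset.Ioi (0 : Fin n)).val.map (wheelEigenvalue ∘ Sum.inl) =
      (Finset.Icc 1 (n - 1)).val.map fun j : ℕ => -2 - 6 * cos (2 * j * π / n) := by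
    rw [hIcc, Finset.map_val, Multiset.map_map]
    refine Multiset.map_congr rfl fun j hj => ?_
    simp [wheelEigenvalue, rimEigenvalue, (Finset.mem_Ioi.mp hj).ne']
  have huniv : (Finset.univ : Finset (Fin n)) = .cons 0 (.Ioi 0) Finset.notMem_Ioi_self := by
    ext
    simp
  rw [← Finset.univ_disjSum_univ, Finset.val_disjSum, Multiset.disjSum, Multiset.map_add,
    Multiset.map_map, Multiset.map_map, huniv, Finset.cons_val, Multiset.map_cons, hrim]
  simp [wheelEigenvalue, add_comm _ ({_} : Multiset ℝ)]

end WheelEigenbasis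

open Real in
theorem signed_wheel_distance_spectrum_general (n : ℕ) (hn : 3 ≤ n) :
    Dmax (wheelGraph n) (wheelSign n) = Dmin (wheelGraph n) (wheelSign n) ∧
    (Dmax (wheelGraph n) (wheelSign n)).charpoly.roots =
      ((n : ℝ) - 4 + Real.sqrt ((n : ℝ) ^ 2 - 7 * n + 16)) ::ₘ
        ((n : ℝ) - 4 - Real.sqrt ((n : ℝ) ^ 2 - 7 * n + 16)) ::ₘ
          Multiset.map (fun j => -2 - 6 * Real.cos (2 * (j : ℝ) * π / n))
            (Finset.Icc 1 (n - 1)).val := by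
  have : NeZero n := ⟨by omega⟩
  refine ⟨Dmax_wheelGraph.trans Dmin_wheelGraph.symm, ?_⟩
  rw [Dmax_wheelGraph, charpoly_signedWheelDistMatrix hn, roots_fintype_prod_X_sub_C,
    univ_val_map_wheelEigenvalue, hubRadical]
  simp [Multiset.bind_singleton, Multiset.map_map]

open Real in
/-- For odd `n`, the signed wheel `(W_{n+1}, σ)` with all rim edges
negative and all spokes positive has `D^± = D^max = D^min`, and the spectrum of
`D^±(W_{n+1}, σ)` consists of the two simple eigenvalues `n - 4 ± √(n² - 7n + 16)`
together with the eigenvalues `-2 - 6·cos(2jπ/n)` for `j = 1, 2, …, n - 1`. -/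
theorem signed_wheel_distance_spectrum (n : ℕ) (hodd : Odd n) (hn : 3 ≤ n) :
    Dmax (wheelGraph n) (wheelSign n) = Dmin (wheelGraph n) (wheelSign n) ∧
    (Dmax (wheelGraph n) (wheelSign n)).charpoly.roots =
      ((n : ℝ) - 4 + Real.sqrt ((n : ℝ) ^ 2 - 7 * n + 16)) ::ₘ
        ((n : ℝ) - 4 - Real.sqrt ((n : ℝ) ^ 2 - 7 * n + 16)) ::ₘ
          Multiset.map (fun j => -2 - 6 * Real.cos (2 * (j : ℝ) * π / n))
            (Finset.Icc 1 (n - 1)).val :=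
  signed_wheel_distance_spectrum_general n hn
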